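/- Let k ≥ 2 be an integer. Then the (k−1)-fold series Σ over tuples (n_1, …, n_{k−1}) of squarefree, pairwise coprime positive integers of ∏_{i=1}^{k−1} n_i^{−(1+i/k)} converges and equals c_k = ∏_{p prime} (1 + Σ_{m=k+1}^{2k−1} p^{−m/k}). -/

import Mathlib

open Finset
open scoped Classical
noncomputable def sqfF (k : ℕ) : ℕ → ℝ := fun n =>
  if n ≠ 0 ∧ ∀ p ∈ n.primeFactors, n.factorization p ∈ Finset.Icc (k + 1) (2 * k - 1)
  then (n : ℝ) ^ (-(1 : ℝ) / k) else 0

lemma sqfF_mult (k : ℕ) {m n : ℕ} (h : Nat.Coprime m n) :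
    sqfF k (m * n) = sqfF k m * sqfF k n := by
  rcases eq_or_ne m 0 with rfl | hm
  · simp [sqfF]
  rcases eq_or_ne n 0 with rfl | hn
  · simp [sqfF]
  have hmn : m * n ≠ 0 := mul_ne_zero hm hn
  have hfm : ∀ p ∈ m.primeFactors, (m * n).factorization p = m.factorization p := by
    intro p hp
    have pp := Nat.prime_of_mem_primeFactors hp
    have : ¬ p ∣ n := fun h2 =>
      pp.one_lt.ne' (Nat.eq_one_of_dvd_coprimes h (Nat.dvd_of_mem_primeFactors hp) h2)
    rw [Nat.factorization_mul hm hn, Finsupp.add_apply,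
      Nat.factorization_eq_zero_of_not_dvd this, add_zero]
  have hfn : ∀ p ∈ n.primeFactors, (m * n).factorization p = n.factorization p := by
    intro p hp
    have pp := Nat.prime_of_mem_primeFactors hp
    have : ¬ p ∣ m := fun h2 =>
      pp.one_lt.ne' (Nat.eq_one_of_dvd_coprimes h h2 (Nat.dvd_of_mem_primeFactors hp))
    rw [Nat.factorization_mul hm hn, Finsupp.add_apply,
      Nat.factorization_eq_zero_of_not_dvd this, zero_add]
  have hiff : (∀ p ∈ (m * n).primeFactors,
        (m * n).factorization p ∈ Finset.Icc (k + 1) (2 * k - 1)) ↔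
      (∀ p ∈ m.primeFactors, m.factorization p ∈ Finset.Icc (k + 1) (2 * k - 1)) ∧
      (∀ p ∈ n.primeFactors, n.factorization p ∈ Finset.Icc (k + 1) (2 * k - 1)) := by
    rw [Nat.primeFactors_mul hm hn]
    constructor
    · intro H
      refine ⟨fun p hp => ?_, fun p hp => ?_⟩
      · rw [← hfm p hp]; exact H p (Finset.mem_union_left _ hp)
      · rw [← hfn p hp]; exact H p (Finset.mem_union_right _ hp)
    · rintro ⟨H1, H2⟩ p hp
      rcases Finset.mem_union.mp hp with hp | hp
      · rw [hfm p hp]; exact H1 p hp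
      · rw [hfn p hp]; exact H2 p hp
  by_cases H : (∀ p ∈ m.primeFactors, m.factorization p ∈ Finset.Icc (k + 1) (2 * k - 1)) ∧
      (∀ p ∈ n.primeFactors, n.factorization p ∈ Finset.Icc (k + 1) (2 * k - 1))
  · rw [sqfF, sqfF, sqfF, if_pos ⟨hmn, hiff.mpr H⟩, if_pos ⟨hm, H.1⟩, if_pos ⟨hn, H.2⟩]
    push_cast
    exact Real.mul_rpow (Nat.cast_nonneg m) (Nat.cast_nonneg n)
  · have h0 : sqfF k (m * n) = 0 := by rw [sqfF]; exact if_neg (fun hc => H (hiff.mp hc.2))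
    rcases not_and_or.mp H with H1 | H1
    · have h1 : sqfF k m = 0 := by rw [sqfF]; exact if_neg (fun hc => H1 hc.2)
      rw [h0, h1, zero_mul]
    · have h1 : sqfF k n = 0 := by rw [sqfF]; exact if_neg (fun hc => H1 hc.2)
      rw [h0, h1, mul_zero]


lemma sqfF_nonneg (k n : ℕ) : 0 ≤ sqfF k n := by
  unfold sqfF; split
  · exact Real.rpow_nonneg (Nat.cast_nonneg n) _
  · exact le_refl _

lemma sqfF_one (k : ℕ) : sqfF k 1 = 1 := by simp [sqfF]

lemma sqfF_zero (k : ℕ) : sqfF k 0 = 0 := by simp [sqfF]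


lemma summable_pi_prod : ∀ (n : ℕ) (h : Fin n → ℕ → ℝ), (∀ i x, 0 ≤ h i x) →
    (∀ i, Summable (h i)) → Summable (fun t : Fin n → ℕ => ∏ i, h i (t i)) := by
  intro n
  induction n with
  | zero => intro h _ _; simpa using summable_of_finite_support (Set.toFinite _)
  | succ n ih =>
    intro h h0 hs
    have htail : Summable (fun t : Fin n → ℕ => ∏ i, h i.succ (t i)) :=
      ih (fun i => h i.succ) (fun i x => h0 _ x) (fun i => hs _)
    have h2 : Summable (fun x : ℕ × (Fin n → ℕ) => h 0 x.1 * ∏ i, h i.succ (x.2 i)) := by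
      have := Summable.mul_of_nonneg (hs 0) htail (fun x => h0 0 x)
        (fun t => Finset.prod_nonneg fun i _ => h0 _ _)
      exact this
    have hinj : Function.Injective
        (fun t : Fin (n+1) → ℕ => ((t 0, fun i => t i.succ) : ℕ × (Fin n → ℕ))) := by
      intro a b hab
      exact funext (Fin.cases (congrArg Prod.fst hab)
        (fun i => congrFun (congrArg Prod.snd hab) i))
    have h3 := h2.comp_injective hinj
    refine h3.congr fun t => ?_
    show h 0 (t 0) * ∏ i : Fin n, h i.succ (t i.succ) = ∏ i : Fin (n + 1), h i (t i)
    rw [Fin.prod_univ_succ]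


-- helper: product of distinct primes is squarefree
lemma squarefree_prod_primes {s : Finset ℕ} (hs : ∀ p ∈ s, p.Prime) :
    Squarefree (∏ p ∈ s, p) := by
  have h0 : ∏ p ∈ s, p ≠ 0 := Finset.prod_ne_zero_iff.mpr fun p hp => (hs p hp).ne_zero
  rw [Nat.squarefree_iff_factorization_le_one h0]
  intro q
  rw [Nat.factorization_prod (fun p hp => (hs p hp).ne_zero), Finsupp.finset_sum_apply]
  calc ∑ p ∈ s, (Nat.factorization p) q ≤ ∑ p ∈ s, if p = q then 1 else 0 := by
        refine Finset.sum_le_sum fun p hp => ?_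
        rw [(hs p hp).factorization, Finsupp.single_apply]
    _ ≤ 1 := by rw [Finset.sum_ite_eq' s q (fun _ => 1)]; split <;> omega

def sqfPhi (k : ℕ) (t : Fin (k - 1) → ℕ) : ℕ := ∏ i, t i ^ (k + 1 + (i : ℕ))

def sqfValid (k : ℕ) (t : Fin (k - 1) → ℕ) : Prop :=
  (∀ i, Squarefree (t i)) ∧ (∀ i j : Fin (k - 1), i < j → Nat.Coprime (t i) (t j))

lemma sqfValid.coprime {k : ℕ} {t : Fin (k - 1) → ℕ} (h : sqfValid k t)
    {i j : Fin (k - 1)} (hij : i ≠ j) : Nat.Coprime (t i) (t j) := by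
  rcases lt_or_gt_of_ne hij with hl | hl
  · exact h.2 i j hl
  · exact (h.2 j i hl).symm

lemma sqfValid.ne_zero {k : ℕ} {t : Fin (k - 1) → ℕ} (h : sqfValid k t) (i : Fin (k - 1)) :
    t i ≠ 0 := (h.1 i).ne_zero

lemma sqfPhi_ne_zero {k : ℕ} {t : Fin (k - 1) → ℕ} (h : sqfValid k t) : sqfPhi k t ≠ 0 :=
  Finset.prod_ne_zero_iff.mpr fun i _ => pow_ne_zero _ (h.ne_zero i)

lemma sqfPhi_factorization {k : ℕ} {t : Fin (k - 1) → ℕ} (h : sqfValid k t) (p : ℕ) :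
    (sqfPhi k t).factorization p = ∑ i : Fin (k - 1), (k + 1 + (i : ℕ)) * (t i).factorization p := by
  rw [sqfPhi, Nat.factorization_prod (fun i _ => pow_ne_zero _ (h.ne_zero i))]
  rw [Finsupp.finset_sum_apply]
  refine Finset.sum_congr rfl fun i _ => ?_
  rw [Nat.factorization_pow, Finsupp.smul_apply, smul_eq_mul]

lemma sqfPhi_factorization_eq {k : ℕ} {t : Fin (k - 1) → ℕ} (h : sqfValid k t)
    {p : ℕ} (hp : p.Prime) {i : Fin (k - 1)} (hpi : p ∣ t i) :
    (sqfPhi k t).factorization p = k + 1 + (i : ℕ) := by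
  rw [sqfPhi_factorization h p]
  rw [Finset.sum_eq_single i]
  · rw [Nat.factorization_eq_one_of_squarefree (h.1 i) hp hpi, mul_one]
  · intro j _ hji
    have : ¬ p ∣ t j := fun hd =>
      hp.one_lt.ne' (Nat.eq_one_of_dvd_coprimes (h.coprime hji) hd hpi)
    rw [Nat.factorization_eq_zero_of_not_dvd this, mul_zero]
  · intro hi; exact absurd (Finset.mem_univ i) hi

lemma sqfPhi_mem_primeFactors {k : ℕ} {t : Fin (k - 1) → ℕ} (h : sqfValid k t)
    {p : ℕ} (i : Fin (k - 1)) :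
    p ∈ (t i).primeFactors ↔ p.Prime ∧ (sqfPhi k t).factorization p = k + 1 + (i : ℕ) := by
  constructor
  · intro hp
    have pp := Nat.prime_of_mem_primeFactors hp
    exact ⟨pp, sqfPhi_factorization_eq h pp (Nat.dvd_of_mem_primeFactors hp)⟩
  · rintro ⟨pp, hf⟩
    have hne : ∑ j : Fin (k - 1), (k + 1 + (j : ℕ)) * (t j).factorization p ≠ 0 := by
      rw [← sqfPhi_factorization h p, hf]; omega
    obtain ⟨j, -, hj⟩ := Finset.exists_ne_zero_of_sum_ne_zero hne
    have hdj : p ∣ t j := Nat.dvd_of_factorization_pos (fun hz => hj (by rw [hz, mul_zero]))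
    have := sqfPhi_factorization_eq h pp hdj
    have hij : i = j := by
      apply Fin.ext; omega
    subst hij
    exact Nat.mem_primeFactors.mpr ⟨pp, hdj, h.ne_zero i⟩

lemma sqfPhi_cond {k : ℕ} (hk : 2 ≤ k) {t : Fin (k - 1) → ℕ} (h : sqfValid k t) :
    sqfPhi k t ≠ 0 ∧ ∀ p ∈ (sqfPhi k t).primeFactors,
      (sqfPhi k t).factorization p ∈ Finset.Icc (k + 1) (2 * k - 1) := by
  refine ⟨sqfPhi_ne_zero h, fun p hp => ?_⟩
  have pp := Nat.prime_of_mem_primeFactors hp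
  have hne : (sqfPhi k t).factorization p ≠ 0 := by
    rw [← Nat.support_factorization] at hp
    exact Finsupp.mem_support_iff.mp hp
  rw [sqfPhi_factorization h p] at hne
  obtain ⟨j, -, hj⟩ := Finset.exists_ne_zero_of_sum_ne_zero hne
  have hdj : p ∣ t j := Nat.dvd_of_factorization_pos (fun hz => hj (by rw [hz, mul_zero]))
  rw [sqfPhi_factorization_eq h pp hdj]
  have := j.isLt
  rw [Finset.mem_Icc]
  omega

lemma sqfPhi_value {k : ℕ} (hk : 2 ≤ k) {t : Fin (k - 1) → ℕ} (h : sqfValid k t) :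
    sqfF k (sqfPhi k t) = ∏ i : Fin (k - 1), ((t i : ℝ) ^ (1 + ((i : ℕ) + 1 : ℝ) / k))⁻¹ := by
  have hc := sqfPhi_cond hk h
  rw [sqfF, if_pos hc]
  have hk0 : (k : ℝ) ≠ 0 := Nat.cast_ne_zero.mpr (by omega)
  rw [sqfPhi]
  push_cast
  rw [← Real.finset_prod_rpow _ _ (fun i _ => by positivity)]
  refine Finset.prod_congr rfl fun i _ => ?_
  rw [← Real.rpow_natCast (t i : ℝ) (k + 1 + (i : ℕ)), ← Real.rpow_mul (Nat.cast_nonneg _),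
    ← Real.rpow_neg_one ((t i : ℝ) ^ (1 + ((i : ℕ) + 1 : ℝ) / k)),
    ← Real.rpow_mul (Nat.cast_nonneg _)]
  congr 1
  push_cast
  field_simp
  ring

lemma sqfPhi_injective {k : ℕ} {t s : Fin (k - 1) → ℕ} (ht : sqfValid k t)
    (hs : sqfValid k s) (h : sqfPhi k t = sqfPhi k s) : t = s := by
  funext i
  rw [← Nat.prod_primeFactors_of_squarefree (ht.1 i),
    ← Nat.prod_primeFactors_of_squarefree (hs.1 i)]
  congr 1
  ext p
  rw [sqfPhi_mem_primeFactors ht i, sqfPhi_mem_primeFactors hs i, h]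

lemma sqfPhi_surjective {k : ℕ} (hk : 2 ≤ k) {n : ℕ} (hn : n ≠ 0)
    (hcond : ∀ p ∈ n.primeFactors, n.factorization p ∈ Finset.Icc (k + 1) (2 * k - 1)) :
    ∃ t : Fin (k - 1) → ℕ, sqfValid k t ∧ sqfPhi k t = n := by
  set T : Fin (k - 1) → Finset ℕ :=
    fun i => n.primeFactors.filter (fun p => n.factorization p = k + 1 + (i : ℕ)) with hT
  have hTprime : ∀ i, ∀ p ∈ T i, p.Prime := fun i p hp =>
    Nat.prime_of_mem_primeFactors (Finset.mem_filter.mp hp).1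
  refine ⟨fun i => ∏ p ∈ T i, p, ⟨fun i => squarefree_prod_primes (hTprime i), ?_⟩, ?_⟩
  · intro i j hij
    refine Nat.Coprime.prod_left fun p hp => Nat.Coprime.prod_right fun q hq => ?_
    have hpq : p ≠ q := by
      intro hpq
      have h1 := (Finset.mem_filter.mp hp).2
      have h2 := (Finset.mem_filter.mp hq).2
      rw [hpq] at h1
      rw [h1] at h2
      have := hij
      omega
    exact (Nat.coprime_primes (hTprime i p hp) (hTprime j q hq)).mpr hpq
  · -- sqfPhi = ∏ i, (∏ p ∈ T i, p) ^ (k+1+i) = ∏ i ∏ p ∈ T i, p ^ (n.factorization p) = n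
    have hdisj : Set.PairwiseDisjoint (Finset.univ : Finset (Fin (k - 1))) T := by
      intro i _ j _ hij
      refine Finset.disjoint_left.mpr fun p hp hq => ?_
      have h1 := (Finset.mem_filter.mp hp).2
      have h2 := (Finset.mem_filter.mp hq).2
      rw [h1] at h2
      exact hij (Fin.ext (by omega))
    have hcover : n.primeFactors = Finset.univ.biUnion T := by
      ext p
      simp only [Finset.mem_biUnion, Finset.mem_univ, true_and, hT, Finset.mem_filter]
      constructor
      · intro hp
        have := hcond p hp
        rw [Finset.mem_Icc] at this
        have hk1 : k - 1 ≥ 1 := by omega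
        refine ⟨⟨n.factorization p - (k + 1), by omega⟩, hp, ?_⟩
        simp only []
        omega
      · rintro ⟨i, hp, -⟩; exact hp
    rw [sqfPhi]
    have : ∀ i : Fin (k - 1), (∏ p ∈ T i, p) ^ (k + 1 + (i : ℕ))
        = ∏ p ∈ T i, p ^ n.factorization p := by
      intro i
      rw [← Finset.prod_pow]
      exact Finset.prod_congr rfl fun p hp => by rw [(Finset.mem_filter.mp hp).2]
    calc ∏ i, (∏ p ∈ T i, p) ^ (k + 1 + (i : ℕ))
        = ∏ i, ∏ p ∈ T i, p ^ n.factorization p := Finset.prod_congr rfl fun i _ => this i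
      _ = ∏ p ∈ Finset.univ.biUnion T, p ^ n.factorization p :=
          (Finset.prod_biUnion hdisj).symm
      _ = n := by
          rw [← hcover, Nat.prod_primeFactors_prod_factorization]
          exact Nat.factorization_prod_pow_eq_self hn

lemma sqfF_prime_pow {k : ℕ} (hk : 2 ≤ k) {p : ℕ} (hp : p.Prime) (e : ℕ) :
    sqfF k (p ^ e) = if e ∈ insert 0 (Finset.Icc (k + 1) (2 * k - 1)) then
      (p : ℝ) ^ (-(e : ℝ) / k) else 0 := by
  rcases Nat.eq_zero_or_pos e with rfl | he
  · simp [sqfF, Real.rpow_zero]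
  have hval : ((p ^ e : ℕ) : ℝ) ^ (-(1 : ℝ) / k) = (p : ℝ) ^ (-(e : ℝ) / k) := by
    push_cast
    rw [← Real.rpow_natCast (p : ℝ) e, ← Real.rpow_mul (Nat.cast_nonneg p)]
    congr 1
    ring
  have hcond : (p ^ e ≠ 0 ∧ ∀ q ∈ (p ^ e).primeFactors,
      (p ^ e).factorization q ∈ Finset.Icc (k + 1) (2 * k - 1)) ↔
      e ∈ Finset.Icc (k + 1) (2 * k - 1) := by
    have hpf : (p ^ e).primeFactors = {p} := Nat.primeFactors_prime_pow he.ne' hp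
    constructor
    · rintro ⟨-, H⟩
      have := H p (by rw [hpf]; exact Finset.mem_singleton_self p)
      rwa [hp.factorization_pow, Finsupp.single_apply, if_pos rfl] at this
    · intro H
      refine ⟨pow_ne_zero _ hp.ne_zero, fun q hq => ?_⟩
      rw [hpf, Finset.mem_singleton] at hq
      subst hq
      rwa [hp.factorization_pow, Finsupp.single_apply, if_pos rfl]
  rw [sqfF]
  by_cases H : e ∈ Finset.Icc (k + 1) (2 * k - 1)
  · rw [if_pos (hcond.mpr H), if_pos (Finset.mem_insert_of_mem H), hval]
  · rw [if_neg (fun hc => H (hcond.mp hc)), if_neg ?_]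
    rw [Finset.mem_insert]
    rintro (rfl | hc)
    · omega
    · exact H hc

lemma sqfF_local_sum {k : ℕ} (hk : 2 ≤ k) {p : ℕ} (hp : p.Prime) :
    ∑' e, sqfF k (p ^ e) =
      1 + ∑ m ∈ Finset.Icc (k + 1) (2 * k - 1), (p : ℝ) ^ (-(m : ℝ) / k) := by
  have h0 : (0 : ℕ) ∉ Finset.Icc (k + 1) (2 * k - 1) := by
    rw [Finset.mem_Icc]; omega
  rw [tsum_eq_sum (s := insert 0 (Finset.Icc (k + 1) (2 * k - 1)))
    (fun e he => by rw [sqfF_prime_pow hk hp e, if_neg he])]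
  rw [Finset.sum_congr rfl (fun e he => by rw [sqfF_prime_pow hk hp e, if_pos he]),
    Finset.sum_insert h0]
  norm_num

lemma summable_tupleFun {k : ℕ} (hk : 2 ≤ k) :
    Summable (fun t : Fin (k - 1) → ℕ =>
      if (∀ i, Squarefree (t i)) ∧
          (∀ i j : Fin (k - 1), i < j → Nat.Coprime (t i) (t j)) then
        ∏ i : Fin (k - 1), ((t i : ℝ) ^ (1 + ((i : ℕ) + 1 : ℝ) / k))⁻¹
      else 0) := by
  have hk0 : (0 : ℝ) < (k : ℝ) := by
    have : 0 < k := by omega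
    exact_mod_cast this
  set g : Fin (k - 1) → ℕ → ℝ :=
    fun i x => ((x : ℝ) ^ (1 + ((i : ℕ) + 1 : ℝ) / k))⁻¹ with hg
  have hgnn : ∀ i x, 0 ≤ g i x := fun i x => by
    apply inv_nonneg.mpr
    exact Real.rpow_nonneg (Nat.cast_nonneg x) _
  have hgs : ∀ i, Summable (g i) := by
    intro i
    apply Real.summable_nat_rpow_inv.mpr
    have h1 : (0 : ℝ) < ((i : ℕ) + 1 : ℝ) / k := by positivity
    linarith
  have hG := summable_pi_prod (k - 1) g hgnn hgs
  refine hG.of_nonneg_of_le (fun t => ?_) (fun t => ?_)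
  · split
    · exact Finset.prod_nonneg fun i _ => hgnn i (t i)
    · exact le_refl 0
  · split
    · exact le_refl _
    · exact Finset.prod_nonneg fun i _ => hgnn i (t i)

theorem hasSum_squarefree_pairwise_coprime_tuples (k : ℕ) (hk : 2 ≤ k) :
    HasSum (fun t : Fin (k - 1) → ℕ =>
        if (∀ i, Squarefree (t i)) ∧
            (∀ i j : Fin (k - 1), i < j → Nat.Coprime (t i) (t j)) then
          ∏ i : Fin (k - 1), ((t i : ℝ) ^ (1 + ((i : ℕ) + 1 : ℝ) / k))⁻¹
        else 0)
      (∏' p : Nat.Primes,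
        (1 + ∑ m ∈ Finset.Icc (k + 1) (2 * k - 1), ((p : ℕ) : ℝ) ^ (-(m : ℝ) / k))) := by
  set tupleFun : (Fin (k - 1) → ℕ) → ℝ := fun t =>
    if (∀ i, Squarefree (t i)) ∧
        (∀ i j : Fin (k - 1), i < j → Nat.Coprime (t i) (t j)) then
      ∏ i : Fin (k - 1), ((t i : ℝ) ^ (1 + ((i : ℕ) + 1 : ℝ) / k))⁻¹
    else 0 with htf
  have hsumT : Summable tupleFun := summable_tupleFun hk
  set emb : {t : Fin (k - 1) → ℕ // sqfValid k t} → ℕ := fun t => sqfPhi k t.1 with hemb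
  have hinj : Function.Injective emb := fun a b hab =>
    Subtype.ext (sqfPhi_injective a.2 b.2 hab)
  have hvanish : ∀ n ∉ Set.range emb, sqfF k n = 0 := by
    intro n hn
    by_contra h
    have hc : n ≠ 0 ∧ ∀ p ∈ n.primeFactors,
        n.factorization p ∈ Finset.Icc (k + 1) (2 * k - 1) := by
      by_contra hc
      rw [sqfF, if_neg hc] at h
      exact h rfl
    obtain ⟨t, htv, htp⟩ := sqfPhi_surjective hk hc.1 hc.2
    exact hn ⟨⟨t, htv⟩, htp⟩
  have hcomp : (sqfF k) ∘ emb = fun t : {t : Fin (k - 1) → ℕ // sqfValid k t} =>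
      tupleFun t.1 := by
    funext t
    show sqfF k (sqfPhi k t.1) = tupleFun t.1
    rw [sqfPhi_value hk t.2, htf]
    exact (if_pos ⟨t.2.1, t.2.2⟩).symm
  have hsumF : Summable (sqfF k) := by
    refine (hinj.summable_iff hvanish).mp ?_
    rw [hcomp]
    exact hsumT.subtype _
  have hnorm : Summable (fun n => ‖sqfF k n‖) := by
    refine hsumF.congr fun n => ?_
    rw [Real.norm_of_nonneg (sqfF_nonneg k n)]
  have hprod := EulerProduct.eulerProduct_hasProd (f := sqfF k) (sqfF_one k)
    (fun {m n} h => sqfF_mult k h) hnorm (sqfF_zero k)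
  have hfun : (fun p : Nat.Primes => ∑' e, sqfF k ((p : ℕ) ^ e)) =
      fun p : Nat.Primes => 1 + ∑ m ∈ Finset.Icc (k + 1) (2 * k - 1),
        ((p : ℕ) : ℝ) ^ (-(m : ℝ) / k) :=
    funext fun p => sqfF_local_sum hk p.2
  rw [hfun] at hprod
  rw [hprod.tprod_eq]
  have hF : HasSum (sqfF k) (∑' n, sqfF k n) := hsumF.hasSum
  have h1 := (hinj.hasSum_iff hvanish).mpr hF
  rw [hcomp] at h1
  have hsupp : Function.support tupleFun ⊆ {t | sqfValid k t} := by
    intro t ht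
    by_contra hc
    exact ht (if_neg hc)
  exact (hasSum_subtype_iff_of_support_subset hsupp).mp h1
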